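/- Define 4×4 complex matrices in 2×2 block form (blocks of size 2×2): K₁ = (1/√2)·[[I, Z],[0, 0]] and K₂ = (1/√2)·[[Z, −I],[0, 0]], where I is the 2×2 identity and Z = diag(1, −1), and let S(ρ) = K₁ ρ K₁^† + K₂ ρ K₂^†. Then: (a) S is trace-preserving, i.e. K₁^† K₁ + K₂^† K₂ = 1; (b) the range of S is supported on the A block, i.e. P_A S(ρ) P_A = S(ρ) for every ρ; and (c) S does not destroy all coherence between the blocks: there exists a density matrix ρ such that S(ρ) ≠ S(P_A ρ P_A + P_Ā ρ P_Ā). Hence the coherence-destruction conclusion of the main theorem fails when the target subspace is not required to be decoherence-free under S. -/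

import Mathlib

open Matrix BigOperators
open scoped ComplexOrder

/-- The Pauli-Z matrix. -/
noncomputable def pauliZ : Matrix (Fin 2) (Fin 2) ℂ := !![1, 0; 0, -1]

/-- The Kraus operator `K₁ = (1/√2)·[[I, Z],[0, 0]]`. -/
noncomputable def Kone : Matrix (Fin 2 ⊕ Fin 2) (Fin 2 ⊕ Fin 2) ℂ :=
  ((1 / Real.sqrt 2 : ℝ) : ℂ) • Matrix.fromBlocks 1 pauliZ 0 0

/-- The Kraus operator `K₂ = (1/√2)·[[Z, −I],[0, 0]]`. -/
noncomputable def Ktwo : Matrix (Fin 2 ⊕ Fin 2) (Fin 2 ⊕ Fin 2) ℂ :=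
  ((1 / Real.sqrt 2 : ℝ) : ℂ) • Matrix.fromBlocks pauliZ (-1) 0 0

/-- The channel `S(ρ) = K₁ ρ K₁ᴴ + K₂ ρ K₂ᴴ`. -/
noncomputable def chanS (ρ : Matrix (Fin 2 ⊕ Fin 2) (Fin 2 ⊕ Fin 2) ℂ) :
    Matrix (Fin 2 ⊕ Fin 2) (Fin 2 ⊕ Fin 2) ℂ :=
  Kone * ρ * Koneᴴ + Ktwo * ρ * Ktwoᴴ

/-- The orthogonal projection onto the first (`A`) block. -/
noncomputable def projA : Matrix (Fin 2 ⊕ Fin 2) (Fin 2 ⊕ Fin 2) ℂ :=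
  Matrix.fromBlocks 1 0 0 0

/-!
Both Kraus operators have vanishing lower block row, so `S` lands in the `A` block, and
`K₁ᴴ K₁ + K₂ᴴ K₂ = 1` because `Z` is a Hermitian involution. The `A`-block entry `(0, 1)` of
`S ρ` equals `ρ (Ā 0) (A 1) - ρ (A 0) (Ā 1)`, so it only sees the coherences between the blocks:
for the pure state `(|A 0⟩ + |Ā 1⟩) / √2` it is `-1/2`, for its pinching
`P_A ρ P_A + P_Ā ρ P_Ā` it is `0`.
-/

section Blocks

variable {m n α : Type*} [Fintype m] [Fintype n]

theorem fromBlocks_conjTranspose_mul_fromBlocks_zero_zero [NonUnitalNonAssocSemiring α]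
    [StarRing α] (A : Matrix m m α) (B : Matrix m n α) :
    (fromBlocks A B (0 : Matrix n m α) 0)ᴴ * fromBlocks A B 0 0 =
      fromBlocks (Aᴴ * A) (Aᴴ * B) (Bᴴ * A) (Bᴴ * B) := by
  simp [fromBlocks_conjTranspose, fromBlocks_multiply]

theorem fromBlocks_one_zero_zero_zero_mul [DecidableEq m] [NonAssocSemiring α]
    (A : Matrix m m α) (B : Matrix m n α) :
    fromBlocks (1 : Matrix m m α) 0 0 (0 : Matrix n n α) * fromBlocks A B 0 0 =
      fromBlocks A B 0 0 := by
  simp [fromBlocks_multiply]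

theorem fromBlocks_one_pinching [DecidableEq m] [DecidableEq n] [Ring α]
    (M : Matrix (m ⊕ n) (m ⊕ n) α) :
    fromBlocks 1 0 0 0 * M * fromBlocks 1 0 0 0 +
        (1 - fromBlocks 1 0 0 0) * M * (1 - fromBlocks 1 0 0 0) =
      fromBlocks M.toBlocks₁₁ 0 0 M.toBlocks₂₂ := by
  have hQ : (1 : Matrix (m ⊕ n) (m ⊕ n) α) - fromBlocks 1 0 0 0 = fromBlocks 0 0 0 1 := by
    rw [← fromBlocks_one, sub_eq_add_neg, fromBlocks_neg, fromBlocks_add]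
    simp
  rw [hQ, ← fromBlocks_toBlocks M]
  simp [fromBlocks_multiply, fromBlocks_add]

end Blocks

theorem smul_conjTranspose_mul_smul {n R : Type*} [Fintype n] [CommRing R] [StarRing R]
    (c : R) (M N : Matrix n n R) :
    (c • M)ᴴ * (c • N) = (star c * c) • (Mᴴ * N) := by
  rw [conjTranspose_smul, smul_mul_smul_comm]

theorem mul_mul_conjTranspose_mul_of_mul_eq {n α : Type*} [Fintype n] [Semiring α] [StarRing α]
    {P K : Matrix n n α} (hP : Pᴴ = P) (hK : P * K = K) (ρ : Matrix n n α) :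
    P * (K * ρ * Kᴴ) * P = K * ρ * Kᴴ := by
  have hK' : Kᴴ * P = Kᴴ := by rw [← hP, ← conjTranspose_mul, hK]
  simp only [← Matrix.mul_assoc, hK, Matrix.mul_assoc _ Kᴴ, hK']

theorem star_inv_sqrt_two_mul_self : star ((1 / √2 : ℝ) : ℂ) * ((1 / √2 : ℝ) : ℂ) = 1 / 2 := by
  rw [Complex.star_def, Complex.conj_ofReal, ← Complex.ofReal_mul, div_mul_div_comm,
    Real.mul_self_sqrt zero_le_two]
  norm_num

theorem pauliZ_conjTranspose : pauliZᴴ = pauliZ := by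
  ext i j; fin_cases i <;> fin_cases j <;> simp [pauliZ]

theorem pauliZ_mul_self : pauliZ * pauliZ = 1 := by
  ext i j; fin_cases i <;> fin_cases j <;> simp [pauliZ]

theorem kraus_completeness_Kone_Ktwo : Koneᴴ * Kone + Ktwoᴴ * Ktwo = 1 := by
  rw [Kone, Ktwo, smul_conjTranspose_mul_smul, smul_conjTranspose_mul_smul,
    fromBlocks_conjTranspose_mul_fromBlocks_zero_zero,
    fromBlocks_conjTranspose_mul_fromBlocks_zero_zero, ← smul_add, fromBlocks_add,
    star_inv_sqrt_two_mul_self]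
  simp only [pauliZ_conjTranspose, pauliZ_mul_self, conjTranspose_one, Matrix.one_mul,
    Matrix.mul_one, conjTranspose_neg, Matrix.neg_mul, Matrix.mul_neg, neg_neg, add_neg_cancel]
  rw [fromBlocks_smul, ← two_smul ℂ (1 : Matrix (Fin 2) (Fin 2) ℂ), smul_smul]
  norm_num

theorem projA_conjTranspose : projAᴴ = projA := by
  simp [projA, fromBlocks_conjTranspose]

theorem projA_mul_Kone : projA * Kone = Kone := by
  rw [Kone, Matrix.mul_smul, projA, fromBlocks_one_zero_zero_zero_mul]

theorem projA_mul_Ktwo : projA * Ktwo = Ktwo := by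
  rw [Ktwo, Matrix.mul_smul, projA, fromBlocks_one_zero_zero_zero_mul]

theorem projA_mul_chanS_mul_projA (ρ : Matrix (Fin 2 ⊕ Fin 2) (Fin 2 ⊕ Fin 2) ℂ) :
    projA * chanS ρ * projA = chanS ρ := by
  rw [chanS, Matrix.mul_add, Matrix.add_mul,
    mul_mul_conjTranspose_mul_of_mul_eq projA_conjTranspose projA_mul_Kone,
    mul_mul_conjTranspose_mul_of_mul_eq projA_conjTranspose projA_mul_Ktwo]

theorem chanS_apply_inl_zero_inl_one (ρ : Matrix (Fin 2 ⊕ Fin 2) (Fin 2 ⊕ Fin 2) ℂ) :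
    chanS ρ (.inl 0) (.inl 1) = ρ (.inr 0) (.inl 1) - ρ (.inl 0) (.inr 1) := by
  have hc : ((√2 : ℝ) : ℂ)⁻¹ * ((√2 : ℝ) : ℂ)⁻¹ = 2⁻¹ := by
    simpa using star_inv_sqrt_two_mul_self
  simp [chanS, Kone, Ktwo, pauliZ, Matrix.mul_apply, Fintype.sum_sum_type, Fin.sum_univ_two]
  linear_combination 2 * (ρ (.inr 0) (.inl 1) - ρ (.inl 0) (.inr 1)) * hc

def crossBlockVector : Fin 2 ⊕ Fin 2 → ℂ := Pi.single (.inl 0) 1 + Pi.single (.inr 1) 1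

noncomputable def crossBlockState : Matrix (Fin 2 ⊕ Fin 2) (Fin 2 ⊕ Fin 2) ℂ :=
  (2⁻¹ : ℂ) • vecMulVec crossBlockVector (star crossBlockVector)

theorem crossBlockState_posSemidef : crossBlockState.PosSemidef :=
  (posSemidef_vecMulVec_self_star _).smul (by positivity)

theorem crossBlockState_trace : crossBlockState.trace = 1 := by
  rw [crossBlockState, trace_smul, trace_vecMulVec]
  simp [crossBlockVector, dotProduct, Fintype.sum_sum_type, one_add_one_eq_two]

/-- `S` is trace preserving and supported on the `A` block, but
`S` does not destroy all coherence between the blocks: the conclusion of the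
main theorem fails when the target subspace is not decoherence-free. -/
theorem counterexample_without_dfs :
    (Koneᴴ * Kone + Ktwoᴴ * Ktwo = 1) ∧
    (∀ ρ : Matrix (Fin 2 ⊕ Fin 2) (Fin 2 ⊕ Fin 2) ℂ,
      projA * chanS ρ * projA = chanS ρ) ∧
    (∃ ρ : Matrix (Fin 2 ⊕ Fin 2) (Fin 2 ⊕ Fin 2) ℂ,
      ρ.PosSemidef ∧ ρ.trace = 1 ∧
      chanS ρ ≠ chanS (projA * ρ * projA + (1 - projA) * ρ * (1 - projA))) := by
  refine ⟨kraus_completeness_Kone_Ktwo, projA_mul_chanS_mul_projA,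
    crossBlockState, crossBlockState_posSemidef, crossBlockState_trace, fun h => ?_⟩
  have hentry := congrFun (congrFun h (.inl 0)) (.inl 1)
  rw [chanS_apply_inl_zero_inl_one, chanS_apply_inl_zero_inl_one, projA,
    fromBlocks_one_pinching] at hentry
  simp [crossBlockState, crossBlockVector, vecMulVec_apply] at hentry
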